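/- arXiv:2110.05608 — 3 statements merged into one kernel-verified Lean document; each statement's English description precedes it below -/
import Mathlib

section
/- Suppose the segregated state ω_lm maximizes the potential over the four group-symmetric states when the size of Group A is N^A (i.e. ρ*_{N^A}(ω_lm) ≥ ρ*_{N^A}(ω') for ω' ∈ {ω_ll, ω_ml, ω_mm}). Then for every integer k ≥ 1, with Group A size N^A + k and all other parameters unchanged, ω_lm is the unique potential maximizer: ρ*_{N^A + k}(ω_lm) > ρ*_{N^A + k}(ω') for every other group-symmetric state ω' ∈ {ω_ll, ω_ml, ω_mm}. (That is, once all-A-on-m segregation is stochastically stable, it remains uniquely stochastically stable under any increase in the size of Group A.) -/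
/-- C(n, 2) = n(n−1)/2, extended to real arguments. -/
noncomputable def C2 (n : ℝ) : ℝ := n * (n - 1) / 2

/-- Potential at the integrated state ω_ll (everyone on m) when Group A has size M. -/
noncomputable def potLL (M NB γA γB : ℝ) : ℝ := C2 M * γA + C2 NB * γB

/-- Potential at the segregated state ω_lm (Group A on m, Group B on ℓ) when
Group A has size M. -/
noncomputable def potLM (M NB γA γB δ : ℝ) : ℝ :=
  C2 M * γA + M * NB * δ + C2 NB * (1 - γB)

/-- Potential at the segregated state ω_ml (Group A on ℓ, Group B on m) when
Group A has size M. -/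
noncomputable def potML (M NB γA γB δ : ℝ) : ℝ :=
  C2 M * (1 - γA) + M * NB * δ + C2 NB * γB

/-- Potential at the integrated state ω_mm (everyone on ℓ) when Group A has size M. -/
noncomputable def potMM (M NB γA γB : ℝ) : ℝ := C2 M * (1 - γA) + C2 NB * (1 - γB)

/-!
Each of the three potential gaps `potLM − potX` is, as a function of the size `M` of Group A,
a positive multiple of `C2 M` (coefficient `2γA − 1 > 0`) and/or of `M` (coefficient `NB δ`)
plus a constant. Since `C2` is strictly increasing on `[1/2, ∞)`, every gap strictly increases
with `M`, so a gap that is nonnegative at `N^A` is positive at `N^A + k`.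
-/

theorem C2_sub_C2 (a b : ℝ) : C2 b - C2 a = (b - a) * (a + b - 1) / 2 := by
  unfold C2
  ring

theorem C2_strictMonoOn : StrictMonoOn C2 (Set.Ici (1 / 2)) := by
  intro a ha b hb hab
  have hsum : 0 < a + b - 1 := by
    simp only [Set.mem_Ici] at ha hb
    linarith
  have hdiff : 0 < C2 b - C2 a := by
    rw [C2_sub_C2]
    exact div_pos (mul_pos (sub_pos.mpr hab) hsum) two_pos
  linarith

section Gaps

variable {M M' NB γA γB δ : ℝ}

theorem potLM_sub_potLL :
    potLM M NB γA γB δ - potLL M NB γA γB = M * NB * δ - C2 NB * (2 * γB - 1) := by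
  unfold potLM potLL
  ring

theorem potLM_sub_potML :
    potLM M NB γA γB δ - potML M NB γA γB δ = (2 * γA - 1) * C2 M - (2 * γB - 1) * C2 NB := by
  unfold potLM potML
  ring

theorem potLM_sub_potMM :
    potLM M NB γA γB δ - potMM M NB γA γB = (2 * γA - 1) * C2 M + M * NB * δ := by
  unfold potLM potMM
  ring

theorem potLL_lt_potLM_of_le (hNB : 0 < NB) (hδ : 0 < δ) (hM : M < M')
    (h : potLL M NB γA γB ≤ potLM M NB γA γB δ) :
    potLL M' NB γA γB < potLM M' NB γA γB δ := by
  have hgap : M * NB * δ < M' * NB * δ := by gcongr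
  have := potLM_sub_potLL (M := M) (NB := NB) (γA := γA) (γB := γB) (δ := δ)
  have := potLM_sub_potLL (M := M') (NB := NB) (γA := γA) (γB := γB) (δ := δ)
  linarith

theorem potML_lt_potLM_of_le (hγA : 1 / 2 < γA) (hM : 1 / 2 ≤ M) (hMM' : M < M')
    (h : potML M NB γA γB δ ≤ potLM M NB γA γB δ) :
    potML M' NB γA γB δ < potLM M' NB γA γB δ := by
  have hC2 : C2 M < C2 M' := C2_strictMonoOn hM (hM.trans hMM'.le) hMM'
  have hgap : (2 * γA - 1) * C2 M < (2 * γA - 1) * C2 M' := by gcongr; linarith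
  have := potLM_sub_potML (M := M) (NB := NB) (γA := γA) (γB := γB) (δ := δ)
  have := potLM_sub_potML (M := M') (NB := NB) (γA := γA) (γB := γB) (δ := δ)
  linarith

theorem potMM_lt_potLM_of_le (hγA : 1 / 2 < γA) (hNB : 0 ≤ NB) (hδ : 0 ≤ δ) (hM : 1 / 2 ≤ M)
    (hMM' : M < M') (h : potMM M NB γA γB ≤ potLM M NB γA γB δ) :
    potMM M' NB γA γB < potLM M' NB γA γB δ := by
  have hC2 : C2 M < C2 M' := C2_strictMonoOn hM (hM.trans hMM'.le) hMM'
  have hgapA : (2 * γA - 1) * C2 M < (2 * γA - 1) * C2 M' := by gcongr; linarith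
  have hgapB : M * NB * δ ≤ M' * NB * δ := by gcongr
  have := potLM_sub_potMM (M := M) (NB := NB) (γA := γA) (γB := γB) (δ := δ)
  have := potLM_sub_potMM (M := M') (NB := NB) (γA := γA) (γB := γB) (δ := δ)
  linarith

end Gaps

theorem omega_lm_remains_uniquely_stable_under_growth_general
    (NA NB : ℕ) (hNA : 2 ≤ NA) (hNB : 2 ≤ NB)
    (γA γB δ : ℝ) (hγA : γA ∈ Set.Ioo (1/2 : ℝ) 1)
    (hδ : 0 < δ)
    (h : potLM NA NB γA γB δ ≥ potLL NA NB γA γB ∧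
      potLM NA NB γA γB δ ≥ potML NA NB γA γB δ ∧
      potLM NA NB γA γB δ ≥ potMM NA NB γA γB) :
    ∀ k : ℕ, 1 ≤ k →
      potLM (NA + k : ℕ) NB γA γB δ > potLL (NA + k : ℕ) NB γA γB ∧
      potLM (NA + k : ℕ) NB γA γB δ > potML (NA + k : ℕ) NB γA γB δ ∧
      potLM (NA + k : ℕ) NB γA γB δ > potMM (NA + k : ℕ) NB γA γB := by
  intro k hk
  obtain ⟨hLL, hML, hMM⟩ := h
  have hNA' : (1 / 2 : ℝ) ≤ NA := by
    have : (2 : ℝ) ≤ NA := by exact_mod_cast hNA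
    linarith
  have hNB' : (0 : ℝ) < NB := by exact_mod_cast (by omega : 0 < NB)
  have hgrow : (NA : ℝ) < (NA + k : ℕ) := by exact_mod_cast (by omega : NA < NA + k)
  exact ⟨potLL_lt_potLM_of_le hNB' hδ hgrow hLL,
    potML_lt_potLM_of_le hγA.1 hNA' hgrow hML,
    potMM_lt_potLM_of_le hγA.1 hNB'.le hδ.le hNA' hgrow hMM⟩

/-- If the segregated state ω_lm maximizes the potential over the four
group-symmetric states when Group A has size N^A, then for every k ≥ 1, with
Group A size N^A + k, ω_lm is the unique potential maximizer. -/
theorem omega_lm_remains_uniquely_stable_under_growth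
    (NA NB : ℕ) (hNA : 2 ≤ NA) (hNB : 2 ≤ NB)
    (γA γB δ : ℝ) (hγA : γA ∈ Set.Ioo (1/2 : ℝ) 1) (hγB : γB ∈ Set.Ioo (1/2 : ℝ) 1)
    (hδ : 0 < δ)
    (h : potLM NA NB γA γB δ ≥ potLL NA NB γA γB ∧
      potLM NA NB γA γB δ ≥ potML NA NB γA γB δ ∧
      potLM NA NB γA γB δ ≥ potMM NA NB γA γB) :
    ∀ k : ℕ, 1 ≤ k →
      potLM (NA + k : ℕ) NB γA γB δ > potLL (NA + k : ℕ) NB γA γB ∧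
      potLM (NA + k : ℕ) NB γA γB δ > potML (NA + k : ℕ) NB γA γB δ ∧
      potLM (NA + k : ℕ) NB γA γB δ > potMM (NA + k : ℕ) NB γA γB :=
  omega_lm_remains_uniquely_stable_under_growth_general NA NB hNA hNB γA γB δ hγA hδ h
end

section
/- Suppose the integrated state ω_ll maximizes the potential over the four group-symmetric states when the size of Group A is N^A. Then there exists an integer k̂ ≥ 1 such that for all integers k with 0 ≤ k < k̂, with Group A size N^A + k the state ω_ll maximizes the potential over the four group-symmetric states, and for all integers k ≥ k̂, with Group A size N^A + k the segregated state ω_lm maximizes the potential over the four group-symmetric states. (That is, incrementally increasing the size of Group A preserves integration up to a threshold, after which all-A-on-m segregation becomes stochastically stable forever.) -/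
/-!
As Group A grows, the advantage of ω_ll over ω_lm, C(N^B,2)(2γ_B − 1) − M N^B δ, decreases
linearly to −∞, while the advantage of ω_ll over ω_ml, M((M − 1)(2γ_A − 1)/2 − N^B δ), stays
nonnegative once it is, and ω_lm beats ω_mm for every M. So the threshold is where the first
difference changes sign: before it ω_ll ≥ ω_lm ≥ ω_mm, after it ω_lm ≥ ω_ll ≥ ω_ml.
-/

theorem Antitone.exists_threshold {α : Type*} [LinearOrder α] {f : ℕ → α} {c : α}
    (hf : Antitone f) (h0 : c ≤ f 0) (hev : ∃ n, f n ≤ c) :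
    ∃ khat : ℕ, 1 ≤ khat ∧ (∀ k < khat, c ≤ f k) ∧ ∀ k, khat ≤ k → f k ≤ c := by
  obtain ⟨n, hn⟩ := hev
  have hex : ∃ m, 1 ≤ m ∧ f m ≤ c := ⟨n + 1, by omega, (hf n.le_succ).trans hn⟩
  refine ⟨Nat.find hex, (Nat.find_spec hex).1, fun k hk => ?_, fun k hk => ?_⟩
  · rcases Nat.eq_zero_or_pos k with rfl | hk1
    · exact h0
    · exact le_of_lt (lt_of_not_ge fun hle => Nat.find_min hex hk ⟨hk1, hle⟩)
  · exact (hf hk).trans (Nat.find_spec hex).2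

section Potentials

variable {M M' NB γA γB δ : ℝ}

theorem potLL_sub_potLM :
    potLL M NB γA γB - potLM M NB γA γB δ = C2 NB * (2 * γB - 1) - M * NB * δ := by
  unfold potLL potLM; ring

theorem antitone_potLL_sub_potLM (hNB : 0 ≤ NB) (hδ : 0 ≤ δ) :
    Antitone fun M => potLL M NB γA γB - potLM M NB γA γB δ := by
  intro M M' hM
  simp only [potLL_sub_potLM]
  gcongr

theorem exists_forall_ge_potLL_le_potLM (hNB : 0 < NB) (hδ : 0 < δ) :
    ∃ M₀ : ℝ, ∀ M ≥ M₀, potLL M NB γA γB ≤ potLM M NB γA γB δ := by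
  refine ⟨C2 NB * (2 * γB - 1) / (NB * δ), fun M hM => ?_⟩
  rw [← sub_nonpos, potLL_sub_potLM, sub_nonpos, mul_assoc]
  rwa [ge_iff_le, div_le_iff₀ (by positivity)] at hM

theorem potLL_sub_potML :
    potLL M NB γA γB - potML M NB γA γB δ = M * ((M - 1) * (2 * γA - 1) / 2 - NB * δ) := by
  unfold potLL potML C2; ring

theorem potML_le_potLL_of_le (hγA : 1 / 2 ≤ γA) (hM : 0 < M) (hMM' : M ≤ M')
    (h : potML M NB γA γB δ ≤ potLL M NB γA γB) :
    potML M' NB γA γB δ ≤ potLL M' NB γA γB := by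
  rw [← sub_nonneg, potLL_sub_potML] at h ⊢
  have hgap : 0 ≤ (M - 1) * (2 * γA - 1) / 2 - NB * δ := nonneg_of_mul_nonneg_right h hM
  have hgap' : (M - 1) * (2 * γA - 1) / 2 ≤ (M' - 1) * (2 * γA - 1) / 2 := by
    gcongr
    linarith
  exact mul_nonneg (by linarith) (by linarith)

theorem potMM_le_potLM (hγA : 1 / 2 ≤ γA) (hM : 1 ≤ M) (hNB : 0 ≤ NB) (hδ : 0 ≤ δ) :
    potMM M NB γA γB ≤ potLM M NB γA γB δ := by
  have hC2 : 0 ≤ C2 M := by unfold C2; have := sub_nonneg.2 hM; positivity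
  have hM0 : 0 ≤ M := by linarith
  have hgain : 0 ≤ C2 M * (2 * γA - 1) + M * NB * δ :=
    add_nonneg (mul_nonneg hC2 (by linarith)) (by positivity)
  unfold potMM potLM
  linarith

end Potentials

theorem omega_ll_stable_until_threshold_then_omega_lm_general
    (NA NB : ℕ) (hNA : 2 ≤ NA) (hNB : 2 ≤ NB)
    (γA γB δ : ℝ) (hγA : γA ∈ Set.Ioo (1/2 : ℝ) 1)
    (hδ : 0 < δ)
    (h : potLL NA NB γA γB ≥ potLM NA NB γA γB δ ∧
      potLL NA NB γA γB ≥ potML NA NB γA γB δ ∧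
      potLL NA NB γA γB ≥ potMM NA NB γA γB) :
    ∃ khat : ℕ, 1 ≤ khat ∧
      (∀ k : ℕ, k < khat →
        potLL (NA + k : ℕ) NB γA γB ≥ potLM (NA + k : ℕ) NB γA γB δ ∧
        potLL (NA + k : ℕ) NB γA γB ≥ potML (NA + k : ℕ) NB γA γB δ ∧
        potLL (NA + k : ℕ) NB γA γB ≥ potMM (NA + k : ℕ) NB γA γB) ∧
      (∀ k : ℕ, khat ≤ k →
        potLM (NA + k : ℕ) NB γA γB δ ≥ potLL (NA + k : ℕ) NB γA γB ∧
        potLM (NA + k : ℕ) NB γA γB δ ≥ potML (NA + k : ℕ) NB γA γB δ ∧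
        potLM (NA + k : ℕ) NB γA γB δ ≥ potMM (NA + k : ℕ) NB γA γB) := by
  have hNB0 : (0 : ℝ) < NB := by positivity
  have hA : ∀ k : ℕ, (NA : ℝ) ≤ ((NA + k : ℕ) : ℝ) := fun k => Nat.cast_le.2 (NA.le_add_right k)
  have hA1 : ∀ k : ℕ, (1 : ℝ) ≤ ((NA + k : ℕ) : ℝ) := fun k => Nat.one_le_cast.2 (by omega)
  have hML : ∀ k : ℕ, potML (NA + k : ℕ) NB γA γB δ ≤ potLL (NA + k : ℕ) NB γA γB := fun k =>
    potML_le_potLL_of_le hγA.1.le (by positivity) (hA k) h.2.1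
  have hMM : ∀ k : ℕ, potMM (NA + k : ℕ) NB γA γB ≤ potLM (NA + k : ℕ) NB γA γB δ := fun k =>
    potMM_le_potLM hγA.1.le (hA1 k) hNB0.le hδ.le
  have hgap : Antitone fun k : ℕ =>
      potLL (NA + k : ℕ) NB γA γB - potLM (NA + k : ℕ) NB γA γB δ :=
    (antitone_potLL_sub_potLM hNB0.le hδ.le).comp_monotone fun a b hab =>
      Nat.cast_le.2 (Nat.add_le_add_left hab NA)
  obtain ⟨M₀, hM₀⟩ := exists_forall_ge_potLL_le_potLM (γA := γA) (γB := γB) hNB0 hδ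
  obtain ⟨n, hn⟩ := exists_nat_ge M₀
  obtain ⟨khat, hkhat, hbefore, hafter⟩ := hgap.exists_threshold (c := 0)
    (by simpa using sub_nonneg.2 h.1)
    ⟨n, sub_nonpos.2 (hM₀ _ (hn.trans (Nat.cast_le.2 (n.le_add_left NA))))⟩
  refine ⟨khat, hkhat, fun k hk => ?_, fun k hk => ?_⟩
  · have hLM := sub_nonneg.1 (hbefore k hk)
    exact ⟨hLM, hML k, (hMM k).trans hLM⟩
  · have hLM := sub_nonpos.1 (hafter k hk)
    exact ⟨hLM, (hML k).trans hLM, hMM k⟩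

/-- If the integrated state ω_ll maximizes the potential over the four
group-symmetric states when Group A has size N^A, then there is a threshold
k̂ ≥ 1 such that ω_ll remains a potential maximizer for Group A sizes
N^A + k with k < k̂, and ω_lm is a potential maximizer for all k ≥ k̂. -/
theorem omega_ll_stable_until_threshold_then_omega_lm
    (NA NB : ℕ) (hNA : 2 ≤ NA) (hNB : 2 ≤ NB)
    (γA γB δ : ℝ) (hγA : γA ∈ Set.Ioo (1/2 : ℝ) 1) (hγB : γB ∈ Set.Ioo (1/2 : ℝ) 1)
    (hδ : 0 < δ)
    (h : potLL NA NB γA γB ≥ potLM NA NB γA γB δ ∧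
      potLL NA NB γA γB ≥ potML NA NB γA γB δ ∧
      potLL NA NB γA γB ≥ potMM NA NB γA γB) :
    ∃ khat : ℕ, 1 ≤ khat ∧
      (∀ k : ℕ, k < khat →
        potLL (NA + k : ℕ) NB γA γB ≥ potLM (NA + k : ℕ) NB γA γB δ ∧
        potLL (NA + k : ℕ) NB γA γB ≥ potML (NA + k : ℕ) NB γA γB δ ∧
        potLL (NA + k : ℕ) NB γA γB ≥ potMM (NA + k : ℕ) NB γA γB) ∧
      (∀ k : ℕ, khat ≤ k →
        potLM (NA + k : ℕ) NB γA γB δ ≥ potLL (NA + k : ℕ) NB γA γB ∧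
        potLM (NA + k : ℕ) NB γA γB δ ≥ potML (NA + k : ℕ) NB γA γB δ ∧
        potLM (NA + k : ℕ) NB γA γB δ ≥ potMM (NA + k : ℕ) NB γA γB) :=
  omega_ll_stable_until_threshold_then_omega_lm_general NA NB hNA hNB γA γB δ hγA hδ h
end

section
/- Suppose the segregated state ω_ml maximizes the potential over the four group-symmetric states when Group A has size N^A, and suppose for some integer k ≥ 1, with Group A size N^A + k, it holds that γ_A > (N^B/(N^A + k − 1))·δ + 1/2 while C(N^A + k, 2)·(2γ_A − 1) ≤ C(N^B, 2)·(2γ_B − 1). Then with Group A size N^A + k the integrated state ω_ll maximizes the potential over the four group-symmetric states (in particular, γ_B > (N^A + k)/(N^B − 1)·δ + 1/2 holds automatically). -/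
/-!
Write `m = N^A + k`. The hypothesis on `γ_A` says exactly that Group A's coordination gain
`C(m, 2)·(2γ_A − 1)` exceeds the cross-group gain `m·N^B·δ`, i.e. `ω_ll` beats `ω_ml`; the
growth condition passes this to Group B's gain, so `ω_ll` beats `ω_lm`, and read backwards
the same threshold identity for Group B is the bound on `γ_B`. Finally `ω_ll` beats `ω_mm`
because the four potentials satisfy `ρ(ω_ll) + ρ(ω_mm) + 2m·N^B·δ = ρ(ω_lm) + ρ(ω_ml)`.
-/

theorem mul_mul_lt_C2_mul_iff {M N γ δ : ℝ} (hM : 1 < M) :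
    M * N * δ < C2 M * (2 * γ - 1) ↔ N / (M - 1) * δ + 1 / 2 < γ := by
  have hC2 : C2 M * (2 * γ - 1) = M * ((γ - 1 / 2) * (M - 1)) := by unfold C2; ring
  rw [hC2, mul_assoc, mul_lt_mul_iff_right₀ (by linarith), ← lt_sub_iff_add_lt,
    div_mul_eq_mul_div, div_lt_iff₀ (by linarith)]

section Potentials

variable (M NB γA γB δ : ℝ)

theorem potLM_le_potLL_iff :
    potLM M NB γA γB δ ≤ potLL M NB γA γB ↔ M * NB * δ ≤ C2 NB * (2 * γB - 1) := by
  unfold potLM potLL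
  constructor <;> intro <;> linarith

theorem potML_le_potLL_iff :
    potML M NB γA γB δ ≤ potLL M NB γA γB ↔ M * NB * δ ≤ C2 M * (2 * γA - 1) := by
  unfold potML potLL
  constructor <;> intro <;> linarith

theorem potLL_add_potMM_add :
    potLL M NB γA γB + potMM M NB γA γB + 2 * (M * NB * δ) =
      potLM M NB γA γB δ + potML M NB γA γB δ := by
  unfold potLL potMM potLM potML
  ring

variable {M NB γA γB δ}

theorem potMM_le_potLL (hLM : potLM M NB γA γB δ ≤ potLL M NB γA γB)
    (hML : potML M NB γA γB δ ≤ potLL M NB γA γB) (hcross : 0 ≤ M * NB * δ) :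
    potMM M NB γA γB ≤ potLL M NB γA γB := by
  linarith [potLL_add_potMM_add M NB γA γB δ]

end Potentials

theorem omega_ml_to_omega_ll_under_growth_general
    (NA NB : ℕ) (hNA : 2 ≤ NA) (hNB : 2 ≤ NB)
    (γA γB δ : ℝ)
    (hδ : 0 < δ)
    (k : ℕ)
    (hγAbig : γA > ((NB : ℝ) / (((NA : ℝ) + (k : ℝ)) - 1)) * δ + 1/2)
    (hf : C2 ((NA : ℝ) + (k : ℝ)) * (2 * γA - 1) ≤ C2 NB * (2 * γB - 1)) :
    (potLL (NA + k : ℕ) NB γA γB ≥ potLM (NA + k : ℕ) NB γA γB δ ∧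
      potLL (NA + k : ℕ) NB γA γB ≥ potML (NA + k : ℕ) NB γA γB δ ∧
      potLL (NA + k : ℕ) NB γA γB ≥ potMM (NA + k : ℕ) NB γA γB) ∧
    γB > (((NA : ℝ) + (k : ℝ)) / ((NB : ℝ) - 1)) * δ + 1/2 := by
  push_cast
  have hm : 1 < (NA : ℝ) + k := by
    have : (2 : ℝ) ≤ NA := by exact_mod_cast hNA
    linarith [k.cast_nonneg (α := ℝ)]
  have hNB' : (1 : ℝ) < NB := by exact_mod_cast hNB
  have gainA := (mul_mul_lt_C2_mul_iff hm).2 hγAbig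
  have gainB := gainA.trans_le hf
  have hLM := (potLM_le_potLL_iff _ _ γA _ _).2 gainB.le
  have hML := (potML_le_potLL_iff _ _ _ γB _).2 gainA.le
  refine ⟨⟨hLM, hML, potMM_le_potLL hLM hML (by positivity)⟩, ?_⟩
  exact (mul_mul_lt_C2_mul_iff hNB').1 (by linarith [mul_right_comm ((NA : ℝ) + k) NB δ])

/-- Suppose ω_ml maximizes the potential when Group A has size N^A, and for
some k ≥ 1, with Group A size N^A + k, γ_A > (N^B/(N^A + k − 1))·δ + 1/2 while
C(N^A + k, 2)·(2γ_A − 1) ≤ C(N^B, 2)·(2γ_B − 1). Then with Group A size N^A + k,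
the integrated state ω_ll maximizes the potential over the four group-symmetric
states (and γ_B > ((N^A + k)/(N^B − 1))·δ + 1/2 holds automatically). -/
theorem omega_ml_to_omega_ll_under_growth
    (NA NB : ℕ) (hNA : 2 ≤ NA) (hNB : 2 ≤ NB)
    (γA γB δ : ℝ) (hγA : γA ∈ Set.Ioo (1/2 : ℝ) 1) (hγB : γB ∈ Set.Ioo (1/2 : ℝ) 1)
    (hδ : 0 < δ)
    (h : potML NA NB γA γB δ ≥ potLL NA NB γA γB ∧
      potML NA NB γA γB δ ≥ potLM NA NB γA γB δ ∧
      potML NA NB γA γB δ ≥ potMM NA NB γA γB)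
    (k : ℕ) (hk : 1 ≤ k)
    (hγAbig : γA > ((NB : ℝ) / (((NA : ℝ) + (k : ℝ)) - 1)) * δ + 1/2)
    (hf : C2 ((NA : ℝ) + (k : ℝ)) * (2 * γA - 1) ≤ C2 NB * (2 * γB - 1)) :
    (potLL (NA + k : ℕ) NB γA γB ≥ potLM (NA + k : ℕ) NB γA γB δ ∧
      potLL (NA + k : ℕ) NB γA γB ≥ potML (NA + k : ℕ) NB γA γB δ ∧
      potLL (NA + k : ℕ) NB γA γB ≥ potMM (NA + k : ℕ) NB γA γB) ∧
    γB > (((NA : ℝ) + (k : ℝ)) / ((NB : ℝ) - 1)) * δ + 1/2 :=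
  omega_ml_to_omega_ll_under_growth_general NA NB hNA hNB γA γB δ hδ k hγAbig hf
end
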